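/- Let x be a real number with 12 − 5·√3 < x < 12 + 5·√3, and set e₁ = (219 − x²)/(10·√3) and e₂ = √(438·x² − x⁴ − 4761)/(10·√3). In Euclidean 3-space let A' = (5·√3, 0, 0), B' = (0, 5, 0), D' = (0, −5, 0), E' = (e₁, 0, e₂), F' = (e₁, 0, −e₂). Then the Lebesgue volume of the union of the convex hull of {A', B', D', E'} and the convex hull of {A', B', D', F'} equals (5/3)·√(438·x² − x⁴ − 4761). -/

import Mathlib

open Real

/-- The point of Euclidean 3-space with coordinates `x`, `y`, `z`. -/
noncomputable def pt (x y z : ℝ) : EuclideanSpace ℝ (Fin 3) :=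
  (WithLp.equiv 2 (Fin 3 → ℝ)).symm ![x, y, z]

/-!
The two tetrahedra lie on opposite sides of the plane `z = 0`, so they meet in a null set and the
volume of the union is the sum of their volumes. A simplex with vertices `p, p + v₀, …, p + vₙ₋₁`
is an affine image of the corner simplex `{x ≥ 0, ∑ xᵢ ≤ 1}`, whose volume `1 / n!` follows by
slicing along the first coordinate and induction on `n`. Hence each tetrahedron has volume
`|det| / 6`, and here the two determinants are `±50 √3 e₂ = ±5 √(438 x² - x⁴ - 4761)`.
-/

open Set MeasureTheory
open scoped Nat Pointwise

def cornerSimplex (n : ℕ) (t : ℝ) : Set (Fin n → ℝ) := {x | (∀ i, 0 ≤ x i) ∧ ∑ i, x i ≤ t}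

theorem convex_cornerSimplex (n : ℕ) (t : ℝ) : Convex ℝ (cornerSimplex n t) := by
  rintro x ⟨hx0, hx⟩ y ⟨hy0, hy⟩ a b ha hb hab
  refine ⟨fun i => ?_, ?_⟩
  · simp only [Pi.add_apply, Pi.smul_apply, smul_eq_mul]
    have := hx0 i; have := hy0 i
    positivity
  · simp only [Pi.add_apply, Pi.smul_apply, smul_eq_mul, Finset.sum_add_distrib, ← Finset.mul_sum]
    have ht : t = a * t + b * t := by rw [← add_mul, hab, one_mul]
    linarith [mul_le_mul_of_nonneg_left hx ha, mul_le_mul_of_nonneg_left hy hb]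

theorem cornerSimplex_eq_empty {n : ℕ} {t : ℝ} (ht : t < 0) : cornerSimplex n t = ∅ :=
  eq_empty_of_forall_notMem fun _ hx =>
    (Finset.sum_nonneg fun i _ => hx.1 i).not_gt (hx.2.trans_lt ht)

theorem cornerSimplex_succ (n : ℕ) (t : ℝ) :
    cornerSimplex (n + 1) t = MeasurableEquiv.piFinSuccAbove (fun _ => ℝ) 0 ⁻¹'
      {p | 0 ≤ p.1 ∧ p.2 ∈ cornerSimplex n (t - p.1)} := by
  ext x
  simp [cornerSimplex, Fin.forall_fin_succ, Fin.sum_univ_succ, le_sub_iff_add_le', and_assoc,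
    Fin.tail]

theorem measurableSet_cornerSimplex_succ (n : ℕ) (t : ℝ) :
    MeasurableSet {p : ℝ × (Fin n → ℝ) | 0 ≤ p.1 ∧ p.2 ∈ cornerSimplex n (t - p.1)} := by
  simp only [cornerSimplex, mem_ofPred_eq]
  measurability

theorem volume_cornerSimplex (n : ℕ) {t : ℝ} (ht : 0 ≤ t) :
    volume (cornerSimplex n t) = ENNReal.ofReal (t ^ n / n !) := by
  induction n generalizing t with
  | zero => simp [cornerSimplex, ht, volume_pi]
  | succ n ih =>
    have hS := measurableSet_cornerSimplex_succ n t
    have slice (a : ℝ) :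
        volume (Prod.mk a ⁻¹' {p : ℝ × (Fin n → ℝ) | 0 ≤ p.1 ∧ p.2 ∈ cornerSimplex n (t - p.1)}) =
          (Icc 0 t).indicator (fun a => ENNReal.ofReal ((t - a) ^ n / n !)) a := by
      by_cases ha : 0 ≤ a
      · by_cases hat : a ≤ t
        · simp [ha, hat, ih (sub_nonneg.2 hat)]
        · simp [ha, hat, cornerSimplex_eq_empty (sub_neg.2 (not_le.1 hat))]
      · simp [ha]
    rw [cornerSimplex_succ, (volume_preserving_piFinSuccAbove (fun _ => ℝ) 0).measure_preimage
      hS.nullMeasurableSet, Measure.volume_eq_prod, Measure.prod_apply hS]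
    simp_rw [slice]
    rw [lintegral_indicator measurableSet_Icc, ← ofReal_integral_eq_lintegral_ofReal
      (Continuous.integrableOn_Icc (by fun_prop))
      ((ae_restrict_mem measurableSet_Icc).mono fun a ha =>
        div_nonneg (pow_nonneg (sub_nonneg.2 ha.2) _) (by positivity)),
      integral_Icc_eq_integral_Ioc, ← intervalIntegral.integral_of_le ht,
      intervalIntegral.integral_div, intervalIntegral.integral_comp_sub_left (fun a => a ^ n),
      integral_pow]
    congr 1
    push_cast [Nat.factorial_succ]
    field_simp
    ring

theorem convexHull_insert_zero_basisFun (n : ℕ) :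
    convexHull ℝ (insert 0 (range fun i : Fin n => Pi.single i (1 : ℝ))) = cornerSimplex n 1 := by
  refine Subset.antisymm (convexHull_min ?_ (convex_cornerSimplex n 1)) ?_
  · rintro _ (rfl | ⟨i, rfl⟩)
    · simp [cornerSimplex]
    · simp [cornerSimplex, Pi.single_apply, apply_ite]
  · rintro x ⟨hx0, hx1⟩
    have key :=
      (convex_convexHull ℝ (insert 0 (range fun i : Fin n => Pi.single i (1 : ℝ)))).sum_mem
      (t := Finset.univ) (w := Option.elim' (1 - ∑ i, x i) x)
      (z := Option.elim' 0 fun i => Pi.single i 1) ?_ ?_ ?_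
    · rw [pi_eq_sum_univ' x]
      simpa [Fintype.sum_option] using key
    · rintro (_ | i) -
      exacts [sub_nonneg.2 hx1, hx0 i]
    · simp [Fintype.sum_option]
    · rintro (_ | i) - <;> apply subset_convexHull
      exacts [mem_insert _ _, mem_insert_of_mem _ ⟨i, rfl⟩]

theorem volume_convexHull_simplex {n : ℕ} (p : Fin n → ℝ) (v : Fin n → Fin n → ℝ) :
    volume (convexHull ℝ (insert p (range fun i => p + v i))) =
      ENNReal.ofReal (|(Matrix.of v).det| / n !) := by
  set M := Matrix.toLin' (Matrix.of v).transpose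
  have hvert : insert p (range fun i => p + v i) =
      p +ᵥ M '' insert 0 (range fun i => Pi.single i 1) := by
    simp [image_insert_eq, ← range_comp, M, Function.comp_def, Matrix.mulVec_single,
      Set.vadd_set_insert, Set.vadd_set_range]
  rw [hvert, convexHull_vadd, measure_vadd, ← LinearMap.image_convexHull,
    Measure.addHaar_image_linearMap, convexHull_insert_zero_basisFun,
    volume_cornerSimplex n zero_le_one, LinearMap.det_toLin',
    Matrix.det_transpose, ← ENNReal.ofReal_mul (abs_nonneg _)]
  simp [div_eq_mul_inv]

theorem volume_convexHull_tetrahedron (a b c d : Fin 3 → ℝ) :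
    volume (convexHull ℝ {a, b, c, d}) =
      ENNReal.ofReal (|(Matrix.of ![b - a, c - a, d - a]).det| / 6) := by
  have hvert : ({a, b, c, d} : Set (Fin 3 → ℝ)) =
      insert a (range fun i => a + ![b - a, c - a, d - a] i) := by
    ext y
    simp [Fin.exists_fin_succ, eq_comm]
  rw [hvert, volume_convexHull_simplex]
  norm_num [Nat.factorial]

theorem volume_union_of_subset_halfSpaces {ι : Type*} [Fintype ι] {s t : Set (ι → ℝ)} (i : ι)
    (hs : s ⊆ {x | 0 ≤ x i}) (ht : t ⊆ {x | x i ≤ 0}) (htm : NullMeasurableSet t) :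
    volume (s ∪ t) = volume s + volume t := by
  have hplane : volume {x : ι → ℝ | x i = 0} = 0 := by
    rw [volume_pi]
    exact Measure.pi_hyperplane _ i 0
  exact measure_union₀ htm
    (measure_mono_null (fun x hx => le_antisymm (ht hx.2) (hs hx.1)) hplane)

theorem convexHull_toLp_image {ι : Type*} (s : Set (ι → ℝ)) :
    convexHull ℝ (WithLp.toLp 2 '' s) = WithLp.toLp 2 '' convexHull ℝ s :=
  ((WithLp.linearEquiv 2 ℝ (ι → ℝ)).symm.toLinearMap.image_convexHull s).symm

theorem volume_toLp_image {ι : Type*} [Fintype ι] (s : Set (ι → ℝ)) :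
    volume (WithLp.toLp 2 '' s : Set (EuclideanSpace ℝ ι)) = volume s := by
  rw [← (EuclideanSpace.volume_preserving_symm_measurableEquiv_toLp ι).measure_preimage_equiv s]
  exact congrArg volume ((WithLp.equiv 2 (ι → ℝ)).symm.image_eq_preimage_symm s)

theorem stmt_16_general (x : ℝ)
    (e₁ e₂ : ℝ)
    (he₂ : e₂ = Real.sqrt (438 * x ^ 2 - x ^ 4 - 4761) / (10 * Real.sqrt 3))
    (A' B' D' E' F' : EuclideanSpace ℝ (Fin 3))
    (hA' : A' = pt (5 * Real.sqrt 3) 0 0)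
    (hB' : B' = pt 0 5 0) (hD' : D' = pt 0 (-5) 0)
    (hE' : E' = pt e₁ 0 e₂) (hF' : F' = pt e₁ 0 (-e₂)) :
    MeasureTheory.volume
        (convexHull ℝ ({A', B', D', E'} : Set (EuclideanSpace ℝ (Fin 3))) ∪
         convexHull ℝ ({A', B', D', F'} : Set (EuclideanSpace ℝ (Fin 3))))
      = ENNReal.ofReal ((5 / 3) * Real.sqrt (438 * x ^ 2 - x ^ 4 - 4761)) := by
  have he₂0 : 0 ≤ e₂ := he₂ ▸ by positivity
  have hpts (a b c d : Fin 3 → ℝ) :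
      ({WithLp.toLp 2 a, WithLp.toLp 2 b, WithLp.toLp 2 c, WithLp.toLp 2 d} :
        Set (EuclideanSpace ℝ (Fin 3))) = WithLp.toLp 2 '' {a, b, c, d} := by
    simp [image_insert_eq]
  have hup : convexHull ℝ {![5 * √3, 0, 0], ![0, 5, 0], ![0, -5, 0], ![e₁, 0, e₂]} ⊆
      {y : Fin 3 → ℝ | 0 ≤ y 2} := by
    refine convexHull_min ?_ ((convex_Ici 0).linear_preimage (LinearMap.proj 2))
    rintro _ (rfl | rfl | rfl | rfl) <;> simp [he₂0]
  have hdown : convexHull ℝ {![5 * √3, 0, 0], ![0, 5, 0], ![0, -5, 0], ![e₁, 0, -e₂]} ⊆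
      {y : Fin 3 → ℝ | y 2 ≤ 0} := by
    refine convexHull_min ?_ ((convex_Iic 0).linear_preimage (LinearMap.proj 2))
    rintro _ (rfl | rfl | rfl | rfl) <;> simp [he₂0]
  have hdet (z : ℝ) : (Matrix.of ![![0, 5, 0] - ![5 * √3, 0, 0], ![0, -5, 0] - ![5 * √3, 0, 0],
      ![e₁, 0, z] - ![5 * √3, 0, 0]]).det = 50 * √3 * z := by
    simp [Matrix.det_fin_three]
    ring
  subst hA' hB' hD' hE' hF'
  simp only [pt, WithLp.equiv_symm_apply]
  rw [hpts, hpts, convexHull_toLp_image, convexHull_toLp_image, ← image_union, volume_toLp_image,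
    volume_union_of_subset_halfSpaces 2 hup hdown
      ((Set.toFinite _).isCompact_convexHull ℝ).isClosed.nullMeasurableSet,
    volume_convexHull_tetrahedron, volume_convexHull_tetrahedron, hdet, hdet, mul_neg, abs_neg,
    abs_of_nonneg (by positivity), ← ENNReal.ofReal_add (by positivity) (by positivity), he₂]
  congr 1
  field_simp
  ring

theorem stmt_16 (x : ℝ)
    (hx1 : 12 - 5 * Real.sqrt 3 < x) (hx2 : x < 12 + 5 * Real.sqrt 3)
    (e₁ e₂ : ℝ)
    (he₁ : e₁ = (219 - x ^ 2) / (10 * Real.sqrt 3))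
    (he₂ : e₂ = Real.sqrt (438 * x ^ 2 - x ^ 4 - 4761) / (10 * Real.sqrt 3))
    (A' B' D' E' F' : EuclideanSpace ℝ (Fin 3))
    (hA' : A' = pt (5 * Real.sqrt 3) 0 0)
    (hB' : B' = pt 0 5 0) (hD' : D' = pt 0 (-5) 0)
    (hE' : E' = pt e₁ 0 e₂) (hF' : F' = pt e₁ 0 (-e₂)) :
    MeasureTheory.volume
        (convexHull ℝ ({A', B', D', E'} : Set (EuclideanSpace ℝ (Fin 3))) ∪
         convexHull ℝ ({A', B', D', F'} : Set (EuclideanSpace ℝ (Fin 3))))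
      = ENNReal.ofReal ((5 / 3) * Real.sqrt (438 * x ^ 2 - x ^ 4 - 4761)) :=
  stmt_16_general x e₁ e₂ he₂ A' B' D' E' F' hA' hB' hD' hE' hF'
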